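/- arXiv:2002.04941 — 2 statements merged into one kernel-verified Lean document; each statement's English description precedes it below -/
import Mathlib

section
/- Let p = (v_1, …, v_k) be a walk from s = v_1 to g = v_k in a weighted graph with prefix costs g*, let h be a consistent heuristic with respect to g, and let ε ≥ 1. Suppose indices m ≤ z are given together with real numbers ĝ(v_m), ĝ(v_z) satisfying ĝ(v_m) ≤ ε·g*(v_m) and ĝ(v_z) > ε·g*(v_z). Then the inflated f-values satisfy ĝ(v_m) + ε·h(v_m) < ĝ(v_z) + ε·h(v_z). -/
/-- Along a walk `p = (v_0, …, v_k)` from `s` to `g` with prefix costs `g*`, a consistent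
heuristic `h` w.r.t. `g`, and inflation `ε ≥ 1`: if `m ≤ z ≤ k`, `ghat(v_m) ≤ ε·g*(v_m)` and
`ghat(v_z) > ε·g*(v_z)`, then the inflated f-values satisfy
`ghat(v_m) + ε·h(v_m) < ghat(v_z) + ε·h(v_z)`. -/
theorem fval_of_good_node_lt_fval_of_bad_node {V : Type*}
    (Adj : V → V → Prop) (w : V → V → ℝ)
    (hsymm : ∀ u v, Adj u v → Adj v u)
    (hwsymm : ∀ u v, w u v = w v u)
    (hw : ∀ u v, Adj u v → 0 ≤ w u v)
    (g : V) (h : V → ℝ)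
    (hg : h g = 0)
    (hnn : ∀ v, 0 ≤ h v)
    (hcons : ∀ u v, Adj u v → h u ≤ w u v + h v)
    (s : V) (k : ℕ) (p : ℕ → V)
    (hp0 : p 0 = s) (hpk : p k = g)
    (hadj : ∀ l < k, Adj (p l) (p (l + 1)))
    (ε : ℝ) (hε : 1 ≤ ε)
    (m z : ℕ) (hmz : m ≤ z) (hzk : z ≤ k)
    (gHatM gHatZ : ℝ)
    (hgHatM : gHatM ≤ ε * ∑ l ∈ Finset.range m, w (p l) (p (l + 1)))
    (hgHatZ : gHatZ > ε * ∑ l ∈ Finset.range z, w (p l) (p (l + 1))) :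
    gHatM + ε * h (p m) < gHatZ + ε * h (p z) := by
  have key : ∀ z, m ≤ z → z ≤ k →
      h (p m) ≤ (∑ l ∈ Finset.Ico m z, w (p l) (p (l + 1))) + h (p z) := by
    intro z hmz hzk
    induction z with
    | zero =>
      interval_cases m
      simp
    | succ n ih =>
      rcases Nat.eq_or_lt_of_le hmz with heq | hlt
      · subst heq; simp
      · have hmn : m ≤ n := Nat.lt_succ_iff.mp hlt
        have hnk : n < k := hzk
        have := ih hmn (le_of_lt hnk)
        have hstep : h (p n) ≤ w (p n) (p (n + 1)) + h (p (n + 1)) :=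
          hcons _ _ (hadj n hnk)
        rw [Finset.sum_Ico_succ_top hmn]
        linarith
  have hkey := key z hmz hzk
  have hsplit : ∑ l ∈ Finset.range z, w (p l) (p (l + 1)) =
      (∑ l ∈ Finset.range m, w (p l) (p (l + 1))) +
      ∑ l ∈ Finset.Ico m z, w (p l) (p (l + 1)) := by
    rw [Finset.range_eq_Ico, ← Finset.sum_Ico_consecutive _ (Nat.zero_le m) hmz, ← Finset.range_eq_Ico]
    
  have hε0 : (0:ℝ) < ε := lt_of_lt_of_le one_pos hε
  nlinarith [mul_le_mul_of_nonneg_left hkey (le_of_lt hε0)]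
end

section
/- Let p = (v_1, …, v_k) be a walk from s = v_1 to g = v_k in a weighted graph with prefix costs g*, let h be a consistent heuristic with respect to g, and let 0 ≤ ε' ≤ ε with ε ≥ 1. Suppose an index z and a real number ĝ(v_z) are given with ĝ(v_z) > ε·g*(v_z). Then ε'·h(s) < ĝ(v_z) + ε·h(v_z). -/
/-- Along a walk `p = (v_0, …, v_k)` from `s` to `g` with prefix costs `g*`, a consistent
heuristic `h` w.r.t. `g`, and `0 ≤ ε' ≤ ε` with `ε ≥ 1`: if `ghat(v_z) > ε·g*(v_z)` for an
index `z ≤ k`, then `ε'·h(s) < ghat(v_z) + ε·h(v_z)`, i.e. the start copy on a sparser layer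
has strictly smaller f-value than the over-costed path node. -/
theorem start_copy_fval_lt_bad_node_fval {V : Type*}
    (Adj : V → V → Prop) (w : V → V → ℝ)
    (hsymm : ∀ u v, Adj u v → Adj v u)
    (hwsymm : ∀ u v, w u v = w v u)
    (hw : ∀ u v, Adj u v → 0 ≤ w u v)
    (g : V) (h : V → ℝ)
    (hg : h g = 0)
    (hnn : ∀ v, 0 ≤ h v)
    (hcons : ∀ u v, Adj u v → h u ≤ w u v + h v)
    (s : V) (k : ℕ) (p : ℕ → V)
    (hp0 : p 0 = s) (hpk : p k = g)
    (hadj : ∀ l < k, Adj (p l) (p (l + 1)))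
    (ε ε' : ℝ) (hε : 1 ≤ ε) (hε'0 : 0 ≤ ε') (hε' : ε' ≤ ε)
    (z : ℕ) (hzk : z ≤ k)
    (gHatZ : ℝ)
    (hgHatZ : gHatZ > ε * ∑ l ∈ Finset.range z, w (p l) (p (l + 1))) :
    ε' * h s < gHatZ + ε * h (p z) := by
  have key : ∀ m, m ≤ k → h (p 0) ≤ (∑ l ∈ Finset.range m, w (p l) (p (l + 1))) + h (p m) := by
    intro m
    induction m with
    | zero => simp
    | succ n ih =>
      intro hnk
      have h1 := ih (Nat.le_of_succ_le hnk)
      have h2 := hcons (p n) (p (n+1)) (hadj n (Nat.lt_of_succ_le hnk))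
      rw [Finset.sum_range_succ]
      linarith
  have hkey := key z hzk
  rw [hp0] at hkey
  have h1 : ε' * h s ≤ ε * h s := mul_le_mul_of_nonneg_right hε' (hnn s)
  have h2 : ε * h s ≤ ε * ((∑ l ∈ Finset.range z, w (p l) (p (l + 1))) + h (p z)) :=
    mul_le_mul_of_nonneg_left hkey (by linarith)
  rw [mul_add] at h2
  linarith
end
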